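/- Let D be a domain in ℝ^N, N ≥ 2. If u : D → [-∞,∞) is quasi-nearly subharmonic n.s., then either u ≡ −∞ or u is finite almost everywhere in D and u ∈ L¹_loc(D). -/

import Mathlib

open MeasureTheory Metric Set Filter
open scoped ENNReal NNReal Topology

noncomputable section

/-- `ℝ^N` with the Euclidean metric. -/
abbrev Eucl (N : ℕ) := EuclideanSpace ℝ (Fin N)

/-- The positive part of an extended real number, as an element of `ℝ≥0∞`. -/
noncomputable def ERealPos (x : EReal) : ℝ≥0∞ :=
  if x = ⊤ then ⊤ else ENNReal.ofReal x.toReal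

/-- The (extended-real valued) Lebesgue integral of an extended-real valued function:
the upper integral of its positive part minus the upper integral of its negative part. -/
noncomputable def eIntegral {α : Type*} [MeasurableSpace α] (μ : Measure α)
    (f : α → EReal) : EReal :=
  ((∫⁻ a, ERealPos (f a) ∂μ : ℝ≥0∞) : EReal) - ((∫⁻ a, ERealPos (-(f a)) ∂μ : ℝ≥0∞) : EReal)

/-- `u(x) ≤ (K/(ν_N r^N)) ∫_{B(x,r)} u dm_N`; note that `ν_N r^N` is exactly the Lebesgue
measure of the ball `B^N(x,r)`. -/
def MeanIneqAt {N : ℕ} (K : ℝ) (u : Eucl N → EReal) (x : Eucl N) (r : ℝ) : Prop :=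
  u x ≤ ((K / (volume (ball x r)).toReal : ℝ) : EReal) *
    eIntegral (volume.restrict (ball x r)) u

/-- The mean value inequality with constant `K`, for all closed balls contained in `D`. -/
def MeanIneqOn {N : ℕ} (K : ℝ) (u : Eucl N → EReal) (D : Set (Eucl N)) : Prop :=
  ∀ x : Eucl N, ∀ r : ℝ, 0 < r → closedBall x r ⊆ D → MeanIneqAt K u x r

/-- `u⁺ ∈ L¹_loc(D)`: the positive part of `u` is integrable on every compact subset of `D`. -/
def PosPartLocInt {N : ℕ} (u : Eucl N → EReal) (D : Set (Eucl N)) : Prop :=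
  ∀ C : Set (Eucl N), C ⊆ D → IsCompact C → (∫⁻ x in C, ERealPos (u x) ∂volume) < ⊤

/-- `u ∈ L¹_loc(D)` for an extended-real valued `u`. -/
def ERealLocInt {N : ℕ} (u : Eucl N → EReal) (D : Set (Eucl N)) : Prop :=
  PosPartLocInt u D ∧ PosPartLocInt (fun x => -(u x)) D

/-- `u` is nearly subharmonic on `D`. -/
def NearlySubharmonicOn {N : ℕ} (u : Eucl N → EReal) (D : Set (Eucl N)) : Prop :=
  AEMeasurable u (volume.restrict D) ∧ PosPartLocInt u D ∧ MeanIneqOn 1 u D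

/-- `u` is `K`-quasi-nearly subharmonic n.s. (in the narrow sense) on `D`. -/
def QNSubharmonicNSOn {N : ℕ} (K : ℝ) (u : Eucl N → EReal) (D : Set (Eucl N)) : Prop :=
  AEMeasurable u (volume.restrict D) ∧ PosPartLocInt u D ∧ MeanIneqOn K u D

/-- `u_M := max{u, -M} + M`. -/
noncomputable def shiftPos {N : ℕ} (u : Eucl N → EReal) (M : ℝ) : Eucl N → EReal :=
  fun x => max (u x) ((-M : ℝ) : EReal) + ((M : ℝ) : EReal)

/-- `u` is `K`-quasi-nearly subharmonic on `D`. -/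
def QNSubharmonicOn {N : ℕ} (K : ℝ) (u : Eucl N → EReal) (D : Set (Eucl N)) : Prop :=
  AEMeasurable u (volume.restrict D) ∧ PosPartLocInt u D ∧
    ∀ M : ℝ, 0 ≤ M → MeanIneqOn K (shiftPos u M) D

/-- `u` is subharmonic on `D`: upper semicontinuous and satisfying the mean value
inequality on all closed balls contained in `D` (the constant `-∞` is allowed). -/
def SubharmonicOn {N : ℕ} (u : Eucl N → EReal) (D : Set (Eucl N)) : Prop :=
  UpperSemicontinuousOn u D ∧ MeanIneqOn 1 u D

/-- `h` is harmonic on `D`: continuous and satisfying the mean value equality. -/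
def HarmonicMVOn {N : ℕ} (h : Eucl N → ℝ) (D : Set (Eucl N)) : Prop :=
  ContinuousOn h D ∧ ∀ x : Eucl N, ∀ r : ℝ, 0 < r → closedBall x r ⊆ D →
    h x = ⨍ y in ball x r, h y ∂volume

/-- The Δ₂-condition for a function on `[0,∞)`. -/
def Delta2 (φ : ℝ → ℝ) : Prop :=
  ∃ C ≥ (1 : ℝ), ∀ t ≥ (0 : ℝ), φ (2 * t) ≤ C * φ t

/-- Permissible functions `ψ : [0,∞) → [0,∞)`. -/
def Permissible (ψ : ℝ → ℝ) : Prop :=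
  ∃ ψ₁ ψ₂ : ℝ → ℝ,
    (∀ t ≥ (0 : ℝ), 0 ≤ ψ₁ t) ∧ MonotoneOn ψ₁ (Ici 0) ∧ ConvexOn ℝ (Ici 0) ψ₁ ∧
    Delta2 ψ₁ ∧
    (∀ t ≥ (0 : ℝ), 0 ≤ ψ₂ t) ∧ StrictMonoOn ψ₂ (Ici 0) ∧
    (∀ s ≥ (0 : ℝ), ∃ t ≥ (0 : ℝ), ψ₂ t = s) ∧
    (∃ C ≥ (1 : ℝ), ∀ s a b : ℝ, 0 ≤ s → 0 ≤ a → 0 ≤ b →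
      ψ₂ a = s → ψ₂ b = 2 * s → b ≤ C * a) ∧
    (∃ C > (0 : ℝ), ∀ s t : ℝ, 0 ≤ s → s ≤ t → C * (ψ₂ t / t) ≤ ψ₂ s / s) ∧
    (∀ t ≥ (0 : ℝ), ψ t = ψ₂ (ψ₁ t))

/-- `ψ` is non-constant on `[0,∞)`. -/
def NonConstantOnNonneg (ψ : ℝ → ℝ) : Prop :=
  ∃ s ≥ (0 : ℝ), ∃ t ≥ (0 : ℝ), ψ s ≠ ψ t

/-- `u` is a `λ`-Harnack function on `D`. -/
def HarnackOn {N : ℕ} (lam : ℝ) (u : Eucl N → ℝ) (D : Set (Eucl N)) : Prop :=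
  ContinuousOn u D ∧ (∀ x ∈ D, 0 ≤ u x) ∧
    ∃ C ≥ (1 : ℝ), ∀ x : Eucl N, ∀ r : ℝ, 0 < r → closedBall x r ⊆ D →
      ∀ z₁ ∈ closedBall x (lam * r), ∀ z₂ ∈ closedBall x (lam * r), u z₁ ≤ C * u z₂

/-- Lebesgue measure of the unit ball in `ℝ^N`. -/
noncomputable def unitBallVol (N : ℕ) : ℝ := (volume (ball (0 : Eucl N) 1)).toReal

/-- Identify `ℝ^m × ℝ^n` with `ℝ^(m+n)`. -/
noncomputable def joinE {m n : ℕ} (x : Eucl m) (y : Eucl n) : Eucl (m + n) :=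
  (EuclideanSpace.equiv (Fin (m + n)) ℝ).symm
    (Fin.append (EuclideanSpace.equiv (Fin m) ℝ x) (EuclideanSpace.equiv (Fin n) ℝ y))

/-- The section `Ω(y) = {x ∈ ℝ^m : (x,y) ∈ Ω}`. -/
def secY {m n : ℕ} (Ω : Set (Eucl (m + n))) (y : Eucl n) : Set (Eucl m) :=
  {x : Eucl m | joinE x y ∈ Ω}

/-- The section `Ω(x) = {y ∈ ℝ^n : (x,y) ∈ Ω}`. -/
def secX {m n : ℕ} (Ω : Set (Eucl (m + n))) (x : Eucl m) : Set (Eucl n) :=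
  {y : Eucl n | joinE x y ∈ Ω}


/-!
Let `f = (-u)⁺`. A point of `D` either has a neighbourhood on which `∫ f` is finite, or every
ball around it carries infinite `∫ f`; in the latter case the mean value inequality (with `K > 0`)
forces `u = -∞` on a whole ball around it. Conversely, `∫ f` is infinite on every neighbourhood of
a point near which `u ≡ -∞`. So `D` splits into two disjoint open sets, and by connectedness one of
them is all of `D`. In the second case, compactness and Lindelöf give `(-u)⁺ ∈ L¹_loc(D)` and
`u > -∞` almost everywhere.
-/

lemma measurable_erealPos : Measurable ERealPos :=
  Measurable.ite measurableSet_eq measurable_const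
    (ENNReal.measurable_ofReal.comp measurable_ereal_toReal)

lemma erealPos_eq_top_iff {x : EReal} : ERealPos x = ∞ ↔ x = ⊤ := by
  unfold ERealPos
  split_ifs with h <;> simp [h]

section FiniteLIntegralNear

variable {X : Type*} [TopologicalSpace X] [MeasurableSpace X] {μ : Measure X} {f : X → ℝ≥0∞}

def HasFiniteLIntegralNear (μ : Measure X) (f : X → ℝ≥0∞) (x : X) : Prop :=
  ∃ U ∈ 𝓝 x, ∫⁻ y in U, f y ∂μ < ∞

lemma isOpen_setOf_hasFiniteLIntegralNear : IsOpen {x | HasFiniteLIntegralNear μ f x} := by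
  refine isOpen_iff_mem_nhds.2 fun x ⟨U, hU, hfin⟩ => ?_
  filter_upwards [interior_mem_nhds.2 hU] with y hy
  exact ⟨interior U, isOpen_interior.mem_nhds hy,
    (lintegral_mono_set interior_subset).trans_lt hfin⟩

lemma not_hasFiniteLIntegralNear_of_eventually_eq_top [OpensMeasurableSpace X]
    [μ.IsOpenPosMeasure] {x : X} (hf : ∀ᶠ y in 𝓝 x, f y = ∞) : ¬HasFiniteLIntegralNear μ f x := by
  rintro ⟨U, hU, hfin⟩
  set W := interior (U ∩ {y | f y = ∞})
  have hW : W ∈ 𝓝 x := interior_mem_nhds.2 (inter_mem hU hf)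
  have hW_top : ∫⁻ y in W, f y ∂μ = ∞ := by
    rw [setLIntegral_congr_fun isOpen_interior.measurableSet fun y hy => (interior_subset hy).2,
      setLIntegral_const, ENNReal.top_mul (μ.measure_pos_of_mem_nhds hW).ne']
  refine hfin.ne (top_le_iff.1 ?_)
  exact hW_top.ge.trans (lintegral_mono_set (interior_subset.trans inter_subset_left))

lemma IsCompact.setLIntegral_lt_top_of_hasFiniteLIntegralNear {C : Set X} (hC : IsCompact C)
    (h : ∀ x ∈ C, HasFiniteLIntegralNear μ f x) : ∫⁻ x in C, f x ∂μ < ∞ := by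
  refine hC.induction_on (p := fun s => ∫⁻ x in s, f x ∂μ < ∞) (by simp)
    (fun s t hst ht => (lintegral_mono_set hst).trans_lt ht)
    (fun s t hs ht => (lintegral_union_le f s t).trans_lt (ENNReal.add_lt_top.2 ⟨hs, ht⟩))
    fun x hx => ?_
  obtain ⟨U, hU, hfin⟩ := h x hx
  exact ⟨U, mem_nhdsWithin_of_mem_nhds hU, hfin⟩

lemma ae_restrict_lt_top_of_hasFiniteLIntegralNear [SecondCountableTopology X] {D : Set X}
    (hD : MeasurableSet D) (hf : AEMeasurable f (μ.restrict D))
    (h : ∀ x ∈ D, HasFiniteLIntegralNear μ f x) : ∀ᵐ x ∂μ.restrict D, f x < ∞ := by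
  rw [ae_restrict_iff' hD, ae_iff]
  simp only [Classical.not_imp]
  refine measure_null_of_locally_null _ fun x hx => ?_
  obtain ⟨U, hU, hfin⟩ := h x hx.1
  refine ⟨_, inter_mem_nhdsWithin _ hU, ?_⟩
  have hae : ∀ᵐ y ∂μ.restrict (U ∩ D), f y < ∞ :=
    ae_lt_top' (hf.mono_measure (Measure.restrict_mono inter_subset_right le_rfl))
      ((lintegral_mono_set inter_subset_left).trans_lt hfin).ne
  refine measure_mono_null (fun y hy => ?_)
    (nonpos_iff_eq_zero.1 ((Measure.le_restrict_apply _ _).trans_eq (ae_iff.1 hae)))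
  exact ⟨hy.1.2, hy.2, hy.1.1⟩

end FiniteLIntegralNear

section MeanValue

variable {N : ℕ} {K : ℝ} {u : Eucl N → EReal} {D : Set (Eucl N)}

lemma MeanIneqAt.eq_bot_of_lintegral_eq_top {x : Eucl N} {r : ℝ} (hK : 0 < K) (hr : 0 < r)
    (hu : MeanIneqAt K u x r) (htop : ∫⁻ y in ball x r, ERealPos (-u y) = ∞) : u x = ⊥ := by
  have hvol : 0 < (volume (ball x r)).toReal :=
    ENNReal.toReal_pos (measure_ball_pos volume x hr).ne' measure_ball_lt_top.ne
  have hint : eIntegral (volume.restrict (ball x r)) u = ⊥ := by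
    rw [eIntegral, htop, EReal.coe_ennreal_top, EReal.sub_top]
  rw [MeanIneqAt, hint, EReal.coe_mul_bot_of_pos (div_pos hK hvol)] at hu
  exact le_bot_iff.1 hu

lemma MeanIneqOn.eventually_eq_bot_of_not_hasFiniteLIntegralNear (hK : 0 < K) (hD : IsOpen D)
    (hu : MeanIneqOn K u D) {x : Eucl N} (hx : x ∈ D)
    (hinf : ¬HasFiniteLIntegralNear volume (fun y => ERealPos (-u y)) x) :
    ∀ᶠ y in 𝓝 x, u y = ⊥ := by
  obtain ⟨r, hr, hrD⟩ := nhds_basis_closedBall.mem_iff.1 (hD.mem_nhds hx)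
  filter_upwards [ball_mem_nhds x (half_pos hr)] with y hy
  have hyD : closedBall y (r / 2) ⊆ D :=
    (closedBall_subset_closedBall' (by linarith [mem_ball.1 hy])).trans hrD
  refine (hu y _ (half_pos hr) hyD).eq_bot_of_lintegral_eq_top hK (half_pos hr) ?_
  by_contra hfin
  exact hinf ⟨ball y (r / 2), isOpen_ball.mem_nhds (mem_ball_comm.1 hy), lt_top_iff_ne_top.2 hfin⟩

theorem MeanIneqOn.eq_bot_or_hasFiniteLIntegralNear (hK : 0 < K) (hD : IsOpen D)
    (hDconn : IsPreconnected D) (hu : MeanIneqOn K u D) :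
    (∀ x ∈ D, u x = ⊥) ∨ ∀ x ∈ D, HasFiniteLIntegralNear volume (fun y => ERealPos (-u y)) x := by
  set S := {x | ∀ᶠ y in 𝓝 x, u y = ⊥}
  set E := {x | HasFiniteLIntegralNear volume (fun y => ERealPos (-u y)) x}
  have hdisj : Disjoint S E := disjoint_left.2 fun x hx =>
    not_hasFiniteLIntegralNear_of_eventually_eq_top <| hx.mono fun y hy => by
      simp only [hy, EReal.neg_bot, erealPos_eq_top_iff]
  have hcover : D ⊆ S ∪ E := fun x hx =>
    or_iff_not_imp_right.2 (hu.eventually_eq_bot_of_not_hasFiniteLIntegralNear hK hD hx)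
  rcases hDconn.subset_or_subset isOpen_setOfPred_eventually_nhds
    isOpen_setOf_hasFiniteLIntegralNear hdisj hcover with hS | hE
  · exact .inl fun x hx => (hS hx).self_of_nhds
  · exact .inr hE

end MeanValue

theorem qnsNS_loc_integrable_general
    {N : ℕ} (D : Set (Eucl N)) (hDopen : IsOpen D) (hDconn : IsConnected D)
    (u : Eucl N → EReal)
    (hu : ∃ K ≥ (1 : ℝ), QNSubharmonicNSOn K u D) :
    (∀ x ∈ D, u x = ⊥) ∨
      ((∀ᵐ x ∂(volume.restrict D), u x ≠ ⊥) ∧ ERealLocInt u D) := by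
  obtain ⟨K, hK, hmeas, hpos, hmean⟩ := hu
  refine (hmean.eq_bot_or_hasFiniteLIntegralNear (by linarith) hDopen hDconn.isPreconnected).imp
    id fun hfin => ⟨?_, hpos, fun C hCD hC => hC.setLIntegral_lt_top_of_hasFiniteLIntegralNear
      fun x hx => hfin x (hCD hx)⟩
  have hneg_meas : AEMeasurable (fun x => ERealPos (-u x)) (volume.restrict D) :=
    (measurable_erealPos.comp measurable_neg).comp_aemeasurable hmeas
  filter_upwards [ae_restrict_lt_top_of_hasFiniteLIntegralNear hDopen.measurableSet hneg_meas hfin]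
    with x hx
  simpa [erealPos_eq_top_iff] using hx.ne

/-- a quasi-nearly subharmonic n.s. function on a domain is either `≡ -∞`
or finite almost everywhere and locally integrable. -/
theorem qnsNS_loc_integrable
    {N : ℕ} (hN : 2 ≤ N) (D : Set (Eucl N)) (hDopen : IsOpen D) (hDconn : IsConnected D)
    (u : Eucl N → EReal) (hu_top : ∀ x ∈ D, u x ≠ ⊤)
    (hu : ∃ K ≥ (1 : ℝ), QNSubharmonicNSOn K u D) :
    (∀ x ∈ D, u x = ⊥) ∨
      ((∀ᵐ x ∂(volume.restrict D), u x ≠ ⊥) ∧ ERealLocInt u D) :=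
  qnsNS_loc_integrable_general D hDopen hDconn u hu
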